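/- Let M be a quaternion CR-submanifold of a locally conformal quaternion Kaehler manifold M̄. Then for any X ∈ Γ(D) and Z ∈ Γ(D^⊥), one has g(∇_X X, Z) = g(A_{J_aZ}X, J_aX) − (1/2)‖X‖² ω(Z), and g(∇_{J_aX}(J_aX), Z) = −g(A_{J_aZ}X, J_aX) − (1/2)‖X‖² ω(Z), where ∇ is the induced connection, A the shape operator, and ω the Lee form. -/

import Mathlib

/-!
Abstract model of a locally conformal quaternion Kaehler (l.c.q.K.) manifold `M̄`
together with a quaternion CR-submanifold `M`.

`R` plays the role of the (commutative) ring of smooth functions on `M̄` and `V`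
that of the `R`-module of vector fields on `M̄`.  The structure `LCQK` records:
a derivation action `act` of vector fields on functions, the Lie bracket, the
Riemannian metric `g`, its Levi-Civita connection `nabla`, the three local almost
complex structures `J a` (a = 1,2,3, indexed by `Fin 3`) satisfying the quaternionic
identities and compatibility with `g`, the Lee vector field `B` (the Lee form is
`ω X = g X B`), the skew-symmetric matrix `Q` of local 1-forms, and the fundamental
structure equation (2.4) of a l.c.q.K. manifold:
`∇̄_X (J_a Y) = J_a ∇̄_X Y + ½{θ_a(Y) X − ω(Y) J_a X − Ω_a(X,Y) B + g(X,Y) J_a B}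
   + Q_{ab}(X) J_b Y + Q_{ac}(X) J_c Y`,
where `θ_a = ω ∘ J_a` and `Ω_a(X,Y) = g(X, J_a Y)`.
`half` is the function `1/2`.
-/
structure LCQK (R : Type) (V : Type) [CommRing R] [AddCommGroup V] [Module R V] where
  half : R
  half_add : half + half = 1
  /-- action of a vector field on a function (derivation) -/
  act : V → R → R
  act_add : ∀ X f g, act X (f + g) = act X f + act X g
  act_mul : ∀ X f g, act X (f * g) = f * act X g + g * act X f
  /-- Lie bracket of vector fields -/
  bracket : V → V → V
  /-- the Riemannian metric of `M̄` -/
  g : V → V → R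
  g_symm : ∀ X Y, g X Y = g Y X
  g_add_left : ∀ X Y Z, g (X + Y) Z = g X Z + g Y Z
  g_smul_left : ∀ (f : R) (X Y : V), g (f • X) Y = f * g X Y
  /-- the Levi-Civita connection `∇̄` of `M̄` -/
  nabla : V → V → V
  nabla_add_left : ∀ X Y Z, nabla (X + Y) Z = nabla X Z + nabla Y Z
  nabla_smul_left : ∀ (f : R) (X Y : V), nabla (f • X) Y = f • nabla X Y
  nabla_add_right : ∀ X Y Z, nabla X (Y + Z) = nabla X Y + nabla X Z
  nabla_smul_right : ∀ (X : V) (f : R) (Y : V),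
    nabla X (f • Y) = f • nabla X Y + act X f • Y
  nabla_metric : ∀ X Y Z, act X (g Y Z) = g (nabla X Y) Z + g Y (nabla X Z)
  torsion_free : ∀ X Y, nabla X Y - nabla Y X = bracket X Y
  /-- the local almost complex structures `J₁, J₂, J₃` spanning the bundle `H` -/
  J : Fin 3 → V → V
  J_add : ∀ a X Y, J a (X + Y) = J a X + J a Y
  J_smul : ∀ a (f : R) (X : V), J a (f • X) = f • J a X
  J_sq : ∀ a X, J a (J a X) = -X
  J_cyc : ∀ a X, J a (J (a + 1) X) = J (a + 2) X
  g_J : ∀ a X Y, g (J a X) (J a Y) = g X Y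
  /-- the Lee vector field `B` (so the Lee form is `ω X = g X B`) -/
  B : V
  /-- the skew-symmetric matrix of local 1-forms `Q_{ab}` -/
  Q : Fin 3 → Fin 3 → V → R
  Q_skew : ∀ a b X, Q a b X = -Q b a X
  /-- the l.c.q.K. structure equation (2.4) -/
  struct_eq : ∀ a X Y,
    nabla X (J a Y) = J a (nabla X Y)
      + half • ((g (J a Y) B) • X - (g Y B) • J a X - (g X (J a Y)) • B
          + (g X Y) • J a B)
      + (Q a (a + 1) X) • J (a + 1) Y + (Q a (a + 2) X) • J (a + 2) Y

namespace LCQK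

variable {R V : Type} [CommRing R] [AddCommGroup V] [Module R V]

/-- the Lee form `ω X = g(X, B)` -/
def lee (d : LCQK R V) (X : V) : R := d.g X d.B

/-- the fundamental 2-forms `Ω_a(X,Y) = g(X, J_a Y)` -/
def Om (d : LCQK R V) (a : Fin 3) (X Y : V) : R := d.g X (d.J a Y)

/-- the curvature tensor `R̄(X,Y)Z` of the Levi-Civita connection of `M̄` -/
def curv (d : LCQK R V) (X Y Z : V) : V :=
  d.nabla X (d.nabla Y Z) - d.nabla Y (d.nabla X Z) - d.nabla (d.bracket X Y) Z

/-- the (0,4) curvature tensor `R̄(X,Y,Z,W) = g(R̄(X,Y)Z, W)` of `M̄` -/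
def R4 (d : LCQK R V) (X Y Z W : V) : R := d.g (d.curv X Y Z) W

end LCQK

/-- A quaternion CR-submanifold `M` of the l.c.q.K. manifold `M̄`.

`DD` is (the module of sections of) the quaternion (invariant) distribution `D`,
`Dp` the totally real (anti-invariant) distribution `D^⊥`; they are orthogonal and
the tangent bundle of `M` is `TM = D ⊕ D^⊥` (modelled by `DD ⊔ Dp`); each `J_a`
preserves `D` and maps `D^⊥` into the normal bundle `TM^⊥`.  `tan` is the
orthogonal projection of `M̄`-vector fields onto the tangent part of `M`. -/
structure QCRSub (R V : Type) [CommRing R] [AddCommGroup V] [Module R V]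
    (d : LCQK R V) where
  DD : Submodule R V
  Dp : Submodule R V
  orth : ∀ X ∈ DD, ∀ Z ∈ Dp, d.g X Z = 0
  J_inv : ∀ (a : Fin 3), ∀ X ∈ DD, d.J a X ∈ DD
  J_anti : ∀ (a : Fin 3), ∀ Z ∈ Dp, ∀ Y ∈ DD ⊔ Dp, d.g (d.J a Z) Y = 0
  /-- tangential projection onto `TM = D ⊕ D^⊥` -/
  tan : V → V
  tan_add : ∀ X Y, tan (X + Y) = tan X + tan Y
  tan_smul : ∀ (f : R) (X : V), tan (f • X) = f • tan X
  tan_mem : ∀ X, tan X ∈ DD ⊔ Dp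
  tan_of_mem : ∀ X ∈ DD ⊔ Dp, tan X = X
  tan_orth : ∀ (X : V), ∀ Y ∈ DD ⊔ Dp, d.g (X - tan X) Y = 0
  bracket_tangent : ∀ X ∈ DD ⊔ Dp, ∀ Y ∈ DD ⊔ Dp, d.bracket X Y ∈ DD ⊔ Dp

namespace QCRSub

variable {R V : Type} [CommRing R] [AddCommGroup V] [Module R V] {d : LCQK R V}

/-- the tangent bundle `TM = D ⊕ D^⊥` of `M` -/
def Tg (s : QCRSub R V d) : Submodule R V := s.DD ⊔ s.Dp

/-- a vector field is normal to `M` if it is orthogonal to all tangent fields -/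
def IsNormal (s : QCRSub R V d) (N : V) : Prop := ∀ Y ∈ s.Tg, d.g N Y = 0

/-- normal part of a vector field along `M` -/
def nor (s : QCRSub R V d) (X : V) : V := X - s.tan X

/-- the induced (Levi-Civita) connection `∇` of `M` (Gauss formula) -/
def conn (s : QCRSub R V d) (X Y : V) : V := s.tan (d.nabla X Y)

/-- the second fundamental form `h` of `M` (Gauss formula `∇̄_X Y = ∇_X Y + h(X,Y)`) -/
def h (s : QCRSub R V d) (X Y : V) : V := d.nabla X Y - s.tan (d.nabla X Y)

/-- the shape operator `A_N X` (Weingarten formula `∇̄_X N = −A_N X + ∇^⊥_X N`) -/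
def A (s : QCRSub R V d) (N X : V) : V := -(s.tan (d.nabla X N))

/-- the normal connection `∇^⊥` -/
def nconn (s : QCRSub R V d) (X N : V) : V := d.nabla X N - s.tan (d.nabla X N)

/-- `φ_a X`: tangential part of `J_a X` for `X` tangent -/
def phi (s : QCRSub R V d) (a : Fin 3) (X : V) : V := s.tan (d.J a X)

/-- `ϖ_a X`: normal part of `J_a X` for `X` tangent -/
def varpi (s : QCRSub R V d) (a : Fin 3) (X : V) : V := s.nor (d.J a X)

/-- `f_a N`: tangential part of `J_a N` for `N` normal -/
def fpart (s : QCRSub R V d) (a : Fin 3) (N : V) : V := s.tan (d.J a N)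

/-- `t_a N`: normal (μ-)part of `J_a N` for `N` normal -/
def tn (s : QCRSub R V d) (a : Fin 3) (N : V) : V := s.nor (d.J a N)

/-- membership in `μ`, the orthogonal complement of the `J_a D^⊥` in `TM^⊥` -/
def inMu (s : QCRSub R V d) (N : V) : Prop :=
  s.IsNormal N ∧ ∀ (a : Fin 3), ∀ Z ∈ s.Dp, d.g N (d.J a Z) = 0

end QCRSub

/-!
Pair `∇̄_U U` with `Z ∈ D^⊥`: since `g(U, Z) = 0`, metric compatibility turns this into
`−g(U, ∇̄_U Z) = −g(J_aU, J_a∇̄_U Z)`, and the structure equation replaces `J_a∇̄_U Z` by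
`∇̄_U (J_aZ)` plus Lee-form terms, of which only `−½ ω(Z) J_aU` survives the pairing with
`J_aU`; the `Q`-terms are normal because `J_bZ` is. Weingarten's formula reads the remaining
`g(J_aU, ∇̄_U (J_aZ))` as `−g(A_{J_aZ}U, J_aU)`. This is (3.7) for any `U ∈ D`; (3.8) is (3.7)
for `U = J_aX`, using `J_a² = −1` and the symmetry of the shape operator.
-/

namespace LCQK

variable {R V : Type} [CommRing R] [AddCommGroup V] [Module R V] (d : LCQK R V)

lemma g_add_right (X Y Z : V) : d.g X (Y + Z) = d.g X Y + d.g X Z := by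
  rw [d.g_symm, d.g_add_left, d.g_symm Y, d.g_symm Z]

lemma g_smul_right (f : R) (X Y : V) : d.g X (f • Y) = f * d.g X Y := by
  rw [d.g_symm, d.g_smul_left, d.g_symm]

lemma g_neg_right (X Y : V) : d.g X (-Y) = -d.g X Y := by
  simpa using d.g_smul_right (-1) X Y

lemma g_neg_left (X Y : V) : d.g (-X) Y = -d.g X Y := by
  rw [d.g_symm, d.g_neg_right, d.g_symm]

lemma g_sub_right (X Y Z : V) : d.g X (Y - Z) = d.g X Y - d.g X Z := by
  rw [sub_eq_add_neg, d.g_add_right, d.g_neg_right, sub_eq_add_neg]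

lemma act_zero (X : V) : d.act X 0 = 0 := by
  simpa using d.act_add X 0 0

lemma g_J_self (a : Fin 3) (X : V) : d.g X (d.J a X) = 0 := by
  have h : d.g X (d.J a X) = -d.g X (d.J a X) := by
    conv_lhs => rw [← d.g_J a, d.J_sq, d.g_neg_right, d.g_symm]
  linear_combination (-d.g X (d.J a X)) * d.half_add + d.half * h

lemma g_nabla_left_of_g_eq_zero {X Y Z : V} (h : d.g Y Z = 0) :
    d.g (d.nabla X Y) Z = -d.g Y (d.nabla X Z) := by
  have hm := d.nabla_metric X Y Z
  rw [h, d.act_zero] at hm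
  linear_combination -hm

end LCQK

namespace QCRSub

variable {R V : Type} [CommRing R] [AddCommGroup V] [Module R V] {d : LCQK R V}
  (s : QCRSub R V d)

lemma g_tan {W Y : V} (hY : Y ∈ s.Tg) : d.g (s.tan W) Y = d.g W Y := by
  have h := s.tan_orth W Y hY
  rwa [d.g_symm, d.g_sub_right, sub_eq_zero, d.g_symm Y, d.g_symm Y, eq_comm] at h

lemma g_conn {X Y Z : V} (hZ : Z ∈ s.Tg) : d.g (s.conn X Y) Z = d.g (d.nabla X Y) Z :=
  s.g_tan hZ

lemma g_A {N X Y : V} (hY : Y ∈ s.Tg) : d.g (s.A N X) Y = -d.g (d.nabla X N) Y := by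
  rw [QCRSub.A, d.g_neg_left, s.g_tan hY]

lemma isNormal_J {a : Fin 3} {Z : V} (hZ : Z ∈ s.Dp) : s.IsNormal (d.J a Z) :=
  s.J_anti a Z hZ

lemma g_A_comm {N X Y : V} (hN : s.IsNormal N) (hX : X ∈ s.Tg) (hY : Y ∈ s.Tg) :
    d.g (s.A N X) Y = d.g (s.A N Y) X := by
  have hXY : d.g N (d.nabla X Y) = d.g N (d.nabla Y X) := by
    rw [← sub_eq_zero, ← d.g_sub_right, d.torsion_free]
    exact hN _ (s.bracket_tangent X hX Y hY)
  rw [s.g_A hY, s.g_A hX, d.g_nabla_left_of_g_eq_zero (hN Y hY),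
    d.g_nabla_left_of_g_eq_zero (hN X hX), hXY]

lemma g_nabla_J {T : V} (hT : T ∈ s.Tg) (a : Fin 3) (X : V) {Z : V} (hZ : Z ∈ s.Dp) :
    d.g T (d.nabla X (d.J a Z))
      = d.g T (d.J a (d.nabla X Z))
        + d.half * (d.lee (d.J a Z) * d.g T X - d.lee Z * d.g T (d.J a X)
            - d.g X (d.J a Z) * d.lee T + d.g X Z * d.g T (d.J a d.B)) := by
  have hJZ (b : Fin 3) : d.g T (d.J b Z) = 0 := by
    rw [d.g_symm]; exact s.isNormal_J hZ T hT
  have h := congrArg (d.g T) (d.struct_eq a X Z)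
  simp only [d.g_add_right, d.g_sub_right, d.g_smul_right, hJZ, mul_zero, add_zero] at h
  rw [h, LCQK.lee, LCQK.lee, LCQK.lee, d.g_symm T d.B]

theorem g_conn_self_eq (a : Fin 3) {U Z : V} (hU : U ∈ s.DD) (hZ : Z ∈ s.Dp) :
    d.g (s.conn U U) Z = d.g (s.A (d.J a Z) U) (d.J a U) - d.half * (d.g U U * d.lee Z) := by
  have hUT : U ∈ s.Tg := Submodule.mem_sup_left hU
  have hJUT : d.J a U ∈ s.Tg := Submodule.mem_sup_left (s.J_inv a U hU)
  have hUZ : d.g U Z = 0 := s.orth U hU Z hZ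
  have hUJZ : d.g U (d.J a Z) = 0 := by
    rw [d.g_symm]; exact s.isNormal_J hZ U hUT
  have hJUU : d.g (d.J a U) U = 0 := by
    rw [d.g_symm]; exact d.g_J_self a U
  calc d.g (s.conn U U) Z
      = -d.g (d.J a U) (d.J a (d.nabla U Z)) := by
        rw [s.g_conn (Submodule.mem_sup_right hZ), d.g_nabla_left_of_g_eq_zero hUZ, d.g_J]
    _ = -d.g (d.J a U) (d.nabla U (d.J a Z)) - d.half * (d.g U U * d.lee Z) := by
        rw [s.g_nabla_J hJUT a U hZ, hJUU, d.g_J a U U, hUJZ, hUZ]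
        ring
    _ = d.g (s.A (d.J a Z) U) (d.J a U) - d.half * (d.g U U * d.lee Z) := by
        rw [s.g_A hJUT, d.g_symm (d.J a U)]

end QCRSub

/-- equations (3.7) and (3.8): For a quaternion CR-submanifold `M` of
a l.c.q.K. manifold, for any `X ∈ Γ(D)` and `Z ∈ Γ(D^⊥)` one has
`g(∇_X X, Z) = g(A_{J_aZ}X, J_aX) − ½‖X‖² ω(Z)` and
`g(∇_{J_aX}(J_aX), Z) = −g(A_{J_aZ}X, J_aX) − ½‖X‖² ω(Z)`. -/
theorem conn_lee_formulas {R V : Type} [CommRing R] [AddCommGroup V] [Module R V]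
    (d : LCQK R V) (s : QCRSub R V d) :
    ∀ (a : Fin 3), ∀ X ∈ s.DD, ∀ Z ∈ s.Dp,
      d.g (s.conn X X) Z
          = d.g (s.A (d.J a Z) X) (d.J a X) - d.half * (d.g X X * d.lee Z) ∧
      d.g (s.conn (d.J a X) (d.J a X)) Z
          = -(d.g (s.A (d.J a Z) X) (d.J a X)) - d.half * (d.g X X * d.lee Z) := by
  intro a X hX Z hZ
  refine ⟨s.g_conn_self_eq a hX hZ, ?_⟩
  rw [s.g_conn_self_eq a (s.J_inv a X hX) hZ, d.J_sq, d.g_neg_right, d.g_J,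
    s.g_A_comm (s.isNormal_J hZ) (Submodule.mem_sup_left (s.J_inv a X hX))
      (Submodule.mem_sup_left hX)]
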